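/- arXiv:1911.05644 — 2 statements merged into one kernel-verified Lean document; each statement's English description precedes it below -/
import Mathlib

section
/- The function f(x) = log₂(1 + x^{−η}) is convex on (0, ∞) for every η ≥ 1. -/
/-!
Since `x ^ (-η) = exp (-η log x)`, we have `log (1 + x ^ (-η)) = softplus (-η log x)` with
`softplus t = log (1 + exp t)`. Softplus is convex and increasing (its derivative is the increasing,
positive sigmoid), and `-η log x` is convex for `η ≥ 0`, so the composite is convex; dividing by
`log 2 > 0` preserves convexity.
-/

open Real

theorem ConvexOn.comp_of_monotone_univ {𝕜 E α β : Type*} [Semiring 𝕜] [PartialOrder 𝕜]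
    [AddCommMonoid E] [AddCommMonoid α] [PartialOrder α] [AddCommMonoid β] [PartialOrder β]
    [SMul 𝕜 E] [SMul 𝕜 α] [SMul 𝕜 β] {s : Set E} {f : E → β} {g : β → α}
    (hg : ConvexOn 𝕜 Set.univ g) (hg_mono : Monotone g) (hf : ConvexOn 𝕜 s f) :
    ConvexOn 𝕜 s (g ∘ f) :=
  ⟨hf.1, fun _ hx _ hy _ _ ha hb hab =>
    (hg_mono (hf.2 hx hy ha hb hab)).trans (hg.2 trivial trivial ha hb hab)⟩

namespace Real

noncomputable def softplus (t : ℝ) : ℝ := log (1 + exp t)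

theorem hasDerivAt_softplus (t : ℝ) : HasDerivAt softplus (sigmoid t) t := by
  refine (((hasDerivAt_exp t).const_add 1).log (by positivity)).congr_deriv ?_
  rw [sigmoid_def, exp_neg]
  field_simp
  ring

theorem deriv_softplus : deriv softplus = sigmoid :=
  funext fun t => (hasDerivAt_softplus t).deriv

theorem differentiable_softplus : Differentiable ℝ softplus :=
  fun t => (hasDerivAt_softplus t).differentiableAt

theorem softplus_monotone : Monotone softplus :=
  monotone_of_deriv_nonneg differentiable_softplus fun t => deriv_softplus ▸ sigmoid_nonneg t

theorem convexOn_softplus : ConvexOn ℝ Set.univ softplus :=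
  Monotone.convexOn_univ_of_deriv differentiable_softplus (deriv_softplus ▸ sigmoid_monotone)

theorem softplus_neg_mul_log {x : ℝ} (hx : 0 < x) (η : ℝ) :
    softplus (-(η * log x)) = log (1 + x ^ (-η)) := by
  rw [softplus, rpow_def_of_pos hx, mul_neg, mul_comm]

end Real

/-- The capacity function `f(x) = log₂(1 + x^{-η})` is convex on `(0, ∞)` for `η ≥ 1`. -/
theorem capacity_convexOn (η : ℝ) (hη : 1 ≤ η) :
    ConvexOn ℝ (Set.Ioi (0 : ℝ)) (fun x : ℝ => Real.logb 2 (1 + x ^ (-η))) := by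
  have hlog : ConvexOn ℝ (Set.Ioi (0 : ℝ)) (fun x => -(η * log x)) :=
    (strictConcaveOn_log_Ioi.concaveOn.smul (by linarith)).neg
  have hln : ConvexOn ℝ (Set.Ioi (0 : ℝ)) (fun x => log (1 + x ^ (-η))) :=
    (convexOn_softplus.comp_of_monotone_univ softplus_monotone hlog).congr
      fun x hx => softplus_neg_mul_log hx η
  refine (hln.smul (inv_nonneg.2 (log_nonneg one_le_two))).congr fun x _ => ?_
  simp only [smul_eq_mul, logb, inv_mul_eq_div]
end

section
/- Let G(l) satisfy Mézard–Parisi's fixed point equation in dimension d = 1: G(l) = 2∫_{−l}^∞ e^{−G(y)} dy for all l ∈ ℝ, with G nonnegative and nondecreasing. Then G(l) = log(1 + e^{2l}) is a solution, and the corresponding matching length constant L₁ = 2∫_{−∞}^∞ G(l) e^{−G(l)} dl equals π²/6. -/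
/-!
With `G(l) = log (1 + e^{2l})` we have `e^{-G(y)} = (1 + e^{2y})⁻¹`, whose primitive
`-log (1 + e^{-2y}) / 2` vanishes at `+∞`; this gives the fixed point equation.
For the constant, `e^{G} - 1 = e^{2l}` makes `2 G e^{-G} dl = G'(l) G / (e^G - 1) dl`, and the
substitution `t = G(l)` maps `ℝ` onto `(0, ∞)`. Expanding `1 / (e^t - 1) = ∑ e^{-(n+1)t}` shows that
the Mellin transform of `1 / (e^t - 1)` is `Γ(s) ζ(s)`, so `∫₀^∞ t / (e^t - 1) dt = ζ(2) = π²/6`.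
-/

open Real MeasureTheory Set Filter Topology

lemma exp_neg_log_one_add_exp (x : ℝ) : exp (-log (1 + exp x)) = (1 + exp x)⁻¹ := by
  rw [exp_neg, exp_log (by positivity)]

lemma hasDerivAt_log_one_add_exp_mul (c x : ℝ) :
    HasDerivAt (fun y => log (1 + exp (c * y))) (c * exp (c * x) / (1 + exp (c * x))) x := by
  have h := (((hasDerivAt_id' x).const_mul c).exp.const_add 1).log (by positivity)
  convert h using 1
  ring

lemma tendsto_log_one_add_exp_mul_atTop {c : ℝ} (hc : c < 0) :
    Tendsto (fun y => log (1 + exp (c * y))) atTop (𝓝 0) := by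
  have h : Tendsto (fun y => exp (c * y)) atTop (𝓝 0) :=
    tendsto_exp_atBot.comp (tendsto_id.const_mul_atTop_of_neg hc)
  simpa using ((h.const_add 1).log (by norm_num))

lemma integral_Ioi_inv_one_add_exp_mul {c : ℝ} (hc : 0 < c) (a : ℝ) :
    ∫ y in Ioi a, (1 + exp (c * y))⁻¹ = log (1 + exp (-c * a)) / c := by
  have hderiv : ∀ y ∈ Ici a, HasDerivAt (fun y => -log (1 + exp (-c * y)) / c)
      (1 + exp (c * y))⁻¹ y := by
    intro y _
    refine ((hasDerivAt_log_one_add_exp_mul (-c) y).neg.div_const c).congr_deriv ?_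
    rw [neg_mul c y, exp_neg]
    field_simp
    ring
  have hlim := ((tendsto_log_one_add_exp_mul_atTop (neg_lt_zero.mpr hc)).neg.div_const c)
  rw [neg_zero, zero_div] at hlim
  rw [integral_Ioi_of_hasDerivAt_of_nonneg' hderiv (fun y _ => by positivity) hlim]
  ring

lemma strictMono_log_one_add_exp_mul {c : ℝ} (hc : 0 < c) :
    StrictMono fun x => log (1 + exp (c * x)) := fun x y hxy => by
  dsimp only
  gcongr

lemma range_log_one_add_exp_mul {c : ℝ} (hc : c ≠ 0) :
    range (fun x => log (1 + exp (c * x))) = Ioi 0 := by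
  ext t
  constructor
  · rintro ⟨x, rfl⟩
    exact log_pos (by simp [exp_pos])
  · intro (ht : 0 < t)
    have : 0 < exp t - 1 := by simp [ht]
    refine ⟨log (exp t - 1) / c, ?_⟩
    dsimp only
    rw [mul_div_cancel₀ _ hc, exp_log this, add_sub_cancel, log_exp]

lemma integral_comp_log_one_add_exp_mul {E : Type*} [NormedAddCommGroup E] [NormedSpace ℝ E]
    {c : ℝ} (hc : 0 < c) (g : ℝ → E) :
    ∫ x, (c * exp (c * x) / (1 + exp (c * x))) • g (log (1 + exp (c * x))) =
      ∫ t in Ioi 0, g t := by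
  rw [← range_log_one_add_exp_mul hc.ne', ← image_univ,
    integral_image_eq_integral_deriv_smul_of_monotoneOn MeasurableSet.univ
      (fun x _ => (hasDerivAt_log_one_add_exp_mul c x).hasDerivWithinAt)
      ((strictMono_log_one_add_exp_mul hc).monotone.monotoneOn _), Measure.restrict_univ]

lemma hasSum_exp_neg_nat_add_one_mul {t : ℝ} (ht : 0 < t) :
    HasSum (fun n : ℕ => exp (-((n : ℝ) + 1) * t)) (exp t - 1)⁻¹ := by
  have hterm : (fun n : ℕ => exp (-((n : ℝ) + 1) * t)) = fun n => exp (-t) * exp (-t) ^ n := by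
    ext n
    rw [← exp_nat_mul, ← exp_add]
    ring_nf
  have hsum : (exp t - 1)⁻¹ = exp (-t) * (1 - exp (-t))⁻¹ := by
    have : 1 < exp t := one_lt_exp_iff.mpr ht
    rw [exp_neg]
    field_simp
  rw [hterm, hsum]
  exact (hasSum_geometric_of_lt_one (exp_pos _).le (exp_lt_one_iff.mpr (by linarith))).mul_left _

lemma mellin_inv_exp_sub_one {s : ℂ} (hs : 1 < s.re) :
    mellin (fun t : ℝ => (Complex.exp t - 1)⁻¹) s = Complex.Gamma s * riemannZeta s := by
  have hsum := hasSum_mellin (a := fun _ : ℕ => 1) (p := fun n => (n : ℝ) + 1)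
    (fun n => Or.inr (by positivity)) (by linarith)
    (fun t ht => by simpa using (Complex.hasSum_ofReal.mpr (hasSum_exp_neg_nat_add_one_mul ht)))
    (by simpa using (summable_nat_add_iff 1).mpr (Real.summable_one_div_nat_rpow.mpr hs))
  rw [← hsum.tsum_eq, zeta_eq_tsum_one_div_nat_add_one_cpow hs, ← tsum_mul_left]
  simp [div_eq_mul_inv]

lemma integral_Ioi_div_exp_sub_one : ∫ t in Ioi 0, t / (exp t - 1) = π ^ 2 / 6 := by
  have h := mellin_inv_exp_sub_one (s := 2) (by norm_num)
  rw [riemannZeta_two, mellin, show (2 : ℂ) = (1 : ℕ) + 1 by norm_num,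
    Complex.Gamma_nat_eq_factorial] at h
  have hint : ∀ t ∈ Ioi (0 : ℝ), (t : ℂ) ^ ((1 : ℕ) + 1 - 1 : ℂ) • (Complex.exp t - 1)⁻¹ =
      ((t / (exp t - 1) : ℝ) : ℂ) := by
    intro t _
    push_cast
    simp [div_eq_mul_inv]
  rw [setIntegral_congr_fun measurableSet_Ioi hint, integral_complex_ofReal] at h
  simp only [Nat.factorial_one, Nat.cast_one, one_mul] at h
  exact_mod_cast h

/-- `G(l) = log(1 + e^{2l})` solves the Mézard–Parisi fixed point equation in dimension
one, `G(l) = 2 ∫_{-l}^∞ e^{-G(y)} dy`, and the associated matching-length constant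
`2 ∫_ℝ G(l) e^{-G(l)} dl` equals `π²/6`. -/
theorem mezard_parisi_d1 :
    (∀ l : ℝ, Real.log (1 + Real.exp (2 * l)) =
        2 * ∫ y in Set.Ici (-l), Real.exp (-(Real.log (1 + Real.exp (2 * y))))) ∧
    (2 * ∫ l : ℝ, Real.log (1 + Real.exp (2 * l)) *
        Real.exp (-(Real.log (1 + Real.exp (2 * l)))) = Real.pi ^ 2 / 6) := by
  simp_rw [exp_neg_log_one_add_exp]
  refine ⟨fun l => ?_, ?_⟩
  · rw [integral_Ici_eq_integral_Ioi, integral_Ioi_inv_one_add_exp_mul two_pos, neg_mul_neg]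
    ring
  · have hG : ∀ l : ℝ, 2 * (log (1 + exp (2 * l)) * (1 + exp (2 * l))⁻¹) =
        (2 * exp (2 * l) / (1 + exp (2 * l))) •
          (log (1 + exp (2 * l)) / (exp (log (1 + exp (2 * l))) - 1)) := by
      intro l
      rw [exp_log (by positivity), add_sub_cancel_left, smul_eq_mul]
      field_simp
    rw [← integral_const_mul, integral_congr_ae (.of_forall hG),
      integral_comp_log_one_add_exp_mul two_pos (fun t => t / (exp t - 1)),
      integral_Ioi_div_exp_sub_one]
end
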